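/- arXiv:1209.2773 — 3 statements merged into one kernel-verified Lean document; each statement's English description precedes it below -/
import Mathlib

section
/- Let X and Y be pointed topological spaces, and let (h, u) be a representation of (X, A) as an NDR-pair, i.e. u : X → [0,1] satisfies A = u⁻¹({0}) and h : [0,1] × X → X satisfies h(0,x) = x, h(t,a) = a for a ∈ A, and h(1,x) ∈ A whenever u(x) < 1. Then defining U : C(M, X) → [0,1] on the space of continuous maps f : M → X with compact support (M compact, maps based at a point of A) by U(f) = sup over m ∈ M of u(f(m)), the pair (h∘, U), where h∘ is postcomposition with h, represents (Map^c(M, X), Map^c(M, A)) as an NDR-pair. -/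
/-!
Postcomposition with `h` is a continuous homotopy on `C(M, X)` because `I × C(M, X) → C(M, I × X)`,
`(t, f) ↦ (m ↦ (t, f m))`, is continuous in the compact-open topology. Since `u ≥ 0`, the supremum
`U f = ⨆ m, u (f m)` is the sup norm of `u ∘ f`, which is continuous in `f` as `M` is compact;
it vanishes exactly when `u ∘ f = 0`, i.e. when `f` lands in `A`, and `U f < 1` forces
`u (f m) < 1` for every `m`.
-/

open scoped unitInterval

/-- A representation `(h, u)` of `(X, A)` as an NDR-pair: `u : X → [0,1]` with
`A = u⁻¹({0})` and a homotopy `h : [0,1] × X → X` with `h(0,x) = x`,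
`h(t,a) = a` for `a ∈ A`, and `h(1,x) ∈ A` whenever `u(x) < 1`. -/
structure NDRRep (X : Type*) [TopologicalSpace X] (A : Set X) where
  u : C(X, ℝ)
  h : C(I × X, X)
  u_mem : ∀ x, u x ∈ Set.Icc (0 : ℝ) 1
  u_eq_zero_iff : ∀ x, u x = 0 ↔ x ∈ A
  h_zero : ∀ x, h (0, x) = x
  h_fixes : ∀ (t : I), ∀ a ∈ A, h (t, a) = a
  h_one_mem : ∀ x, u x < 1 → h (1, x) ∈ A

theorem ContinuousMap.norm_eq_iSup_of_nonneg {M : Type*} [TopologicalSpace M] [CompactSpace M]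
    (g : C(M, ℝ)) (hg : ∀ m, 0 ≤ g m) : ‖g‖ = ⨆ m, g m := by
  rw [ContinuousMap.norm_eq_iSup_norm]
  exact iSup_congr fun m => Real.norm_of_nonneg (hg m)

namespace NDRRep

variable {X : Type*} [TopologicalSpace X] {A : Set X} (r : NDRRep X A)
  (M : Type*) [TopologicalSpace M] [CompactSpace M]

noncomputable def mappingSpace : NDRRep C(M, X) {f : C(M, X) | ∀ m, f m ∈ A} where
  u := ⟨fun f => ‖r.u.comp f‖, continuous_norm.comp (ContinuousMap.continuous_postcomp r.u)⟩
  h := ⟨fun p => r.h.comp ((ContinuousMap.const M p.1).prodMk p.2),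
    (ContinuousMap.continuous_postcomp r.h).comp ContinuousMap.continuous_prodMk_const⟩
  u_mem f := ⟨norm_nonneg (r.u.comp f), (ContinuousMap.norm_le _ zero_le_one).2 fun m =>
    (Real.norm_of_nonneg (r.u_mem (f m)).1).trans_le (r.u_mem (f m)).2⟩
  u_eq_zero_iff f := by
    simp only [ContinuousMap.coe_mk, norm_eq_zero, ContinuousMap.ext_iff,
      ContinuousMap.comp_apply, ContinuousMap.zero_apply, r.u_eq_zero_iff, Set.mem_ofPred_eq]
  h_zero f := ContinuousMap.ext fun m => r.h_zero (f m)
  h_fixes t f hf := ContinuousMap.ext fun m => r.h_fixes t (f m) (hf m)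
  h_one_mem f hf m := r.h_one_mem (f m) (((r.u.comp f).apply_le_norm m).trans_lt hf)

theorem mappingSpace_u_apply (f : C(M, X)) : (r.mappingSpace M).u f = ⨆ m, r.u (f m) :=
  (r.u.comp f).norm_eq_iSup_of_nonneg fun m => (r.u_mem (f m)).1

end NDRRep

/-- if `(h, u)` represents `(X, A)` as an NDR-pair and `M` is compact,
then the pair `(h∘, U)` on the mapping space `Map^c(M, X) = C(M, X)`, where
`U(f) = sup_{m ∈ M} u(f(m))` and `h∘` is postcomposition with `h`, represents
`(Map^c(M, X), Map^c(M, A))` as an NDR-pair. -/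
theorem mapping_space_NDR (M X : Type) [TopologicalSpace M] [CompactSpace M]
    [TopologicalSpace X] (A : Set X) (r : NDRRep X A) :
    ∃ R : NDRRep C(M, X) {f : C(M, X) | ∀ m, f m ∈ A},
      (∀ f : C(M, X), R.u f = ⨆ m : M, r.u (f m)) ∧
      (∀ (t : I) (f : C(M, X)) (m : M), R.h (t, f) m = r.h (t, f m)) :=
  ⟨r.mappingSpace M, r.mappingSpace_u_apply M, fun _ _ _ => rfl⟩
end

section
/- Suppose the commutative square with vertical maps i₁ : X → Z and i₂ : Y → W (cofibrations) and horizontal maps f : X → Y, g : Z → W satisfies g ∘ i₁ = i₂ ∘ f. Then the induced inclusion of the mapping cylinder of f into the mapping cylinder of g is a cofibration of topological spaces. -/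
open scoped unitInterval

/-- A continuous map is a cofibration if it has the homotopy extension property. -/
def IsCofibration {A X : Type} [TopologicalSpace A] [TopologicalSpace X]
    (i : C(A, X)) : Prop :=
  ∀ (Y : Type) [TopologicalSpace Y] (f : C(X, Y)) (H : C(I × A, Y)),
    (∀ a, H (0, a) = f (i a)) →
    ∃ G : C(I × X, Y), (∀ x, G (0, x) = f x) ∧ ∀ (t : I) (a : A), G (t, i a) = H (t, a)

/-- The gluing relation for the mapping cylinder of `f : X → Y`:
`(x, 1) ∼ f x` inside `X × [0,1] ⊕ Y`. -/
def cylRel {X Y : Type} [TopologicalSpace X] [TopologicalSpace Y] (f : C(X, Y)) :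
    (X × I ⊕ Y) → (X × I ⊕ Y) → Prop :=
  fun p q => ∃ x : X, p = Sum.inl (x, 1) ∧ q = Sum.inr (f x)

/-- The mapping cylinder of `f : X → Y`, the pushout of `X × [0,1] ← X × {1} → Y`. -/
def Cyl {X Y : Type} [TopologicalSpace X] [TopologicalSpace Y] (f : C(X, Y)) : Type :=
  Quot (cylRel f)

instance {X Y : Type} [TopologicalSpace X] [TopologicalSpace Y] (f : C(X, Y)) :
    TopologicalSpace (Cyl f) :=
  inferInstanceAs (TopologicalSpace (Quot (cylRel f)))

/-- The map of mapping cylinders induced by a commutative square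
`g ∘ i₁ = i₂ ∘ f` with verticals `i₁ : X → Z`, `i₂ : Y → W`. -/
def cylMap {X Y Z W : Type} [TopologicalSpace X] [TopologicalSpace Y]
    [TopologicalSpace Z] [TopologicalSpace W]
    (f : C(X, Y)) (g : C(Z, W)) (i₁ : C(X, Z)) (i₂ : C(Y, W))
    (hsq : ∀ x, g (i₁ x) = i₂ (f x)) : C(Cyl f, Cyl g) where
  toFun := Quot.lift
    (fun p => Quot.mk (cylRel g) (Sum.map (fun q : X × I => (i₁ q.1, q.2)) i₂ p))
    (by
      rintro p q ⟨x, rfl, rfl⟩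
      exact Quot.sound ⟨i₁ x, rfl, by simp [hsq x]⟩)
  continuous_toFun := by
    apply continuous_quot_lift
    exact continuous_quot_mk.comp (Continuous.sumMap (by fun_prop) i₂.continuous)
    

/-!
The homotopy is extended in two stages. Over `W` it extends because `i₂` is a cofibration. Over the
cylinder part `Z × I` it is then prescribed on `X × I` and, through the first extension composed
with `g`, on the end `Z × {1}`; so what is needed is the homotopy extension property of
`X × I ∪ Z × {1} ⊆ Z × I`. A piecewise-linear homeomorphism of the square `I × I` carrying
`{0} × I ∪ I × {1}` onto `{0} × I` turns this into the homotopy extension property of `i₁ × id_I`,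
which follows from that of `i₁` by the exponential law `C(I × Z × I, V) ≅ C(I × Z, C(I, V))`.
The two extensions agree on `Z × {1}`, so they glue over the mapping cylinder of `g`.
-/

open Set

theorem IsCofibration.prodMap_id {A X : Type} [TopologicalSpace A] [TopologicalSpace X]
    {i : C(A, X)} (hi : IsCofibration i) (K : Type) [TopologicalSpace K] [LocallyCompactSpace K] :
    IsCofibration (i.prodMap (ContinuousMap.id K)) := by
  intro Y _ f H hH
  let H' : C(I × A, C(K, Y)) :=
    (H.comp ⟨fun p : (I × A) × K => (p.1.1, (p.1.2, p.2)), by fun_prop⟩).curry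
  obtain ⟨G, hG0, hGi⟩ := hi C(K, Y) f.curry H' fun a => ContinuousMap.ext fun k => hH (a, k)
  refine ⟨G.uncurry.comp ⟨fun p : I × (X × K) => ((p.1, p.2.1), p.2.2), by fun_prop⟩, ?_, ?_⟩
  · rintro ⟨x, k⟩
    simp [hG0]
  · rintro t ⟨a, k⟩
    simp [hGi, H']

namespace unitInterval

/-- A piecewise-linear self-homeomorphism of the square folding `{0} × I ∪ I × {1}` onto `{0} × I`;
`squareUnfold` is its inverse. -/
noncomputable def squareFold : C(I × I, I × I) where
  toFun p := (⟨min p.1 (2 - 2 * p.2), le_min p.1.2.1 (by linarith [p.2.2.2]),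
      min_le_of_left_le p.1.2.2⟩,
    ⟨min (max (p.2 / 2) (2 * p.2 + 3 * p.1 / 2 - 3 / 2)) ((1 + p.1) / 2),
      le_min (le_max_of_le_left (by linarith [p.2.2.1])) (by linarith [p.1.2.1]),
      min_le_of_right_le (by linarith [p.1.2.2])⟩)

noncomputable def squareUnfold : C(I × I, I × I) where
  toFun p := (⟨max p.1 (2 * p.2 - 1), le_max_of_le_left p.1.2.1,
      max_le p.1.2.2 (by linarith [p.2.2.2])⟩,
    ⟨min (2 * p.2) (min (1 - p.1 / 2) (3 / 4 - 3 * p.1 / 4 + p.2 / 2)),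
      le_min (by linarith [p.2.2.1])
        (le_min (by linarith [p.1.2.2]) (by linarith [p.1.2.2, p.2.2.1])),
      min_le_of_right_le (min_le_of_left_le (by linarith [p.1.2.1]))⟩)

theorem squareUnfold_squareFold (p : I × I) : squareUnfold (squareFold p) = p := by
  obtain ⟨⟨t, ht0, ht1⟩, ⟨s, hs0, hs1⟩⟩ := p
  refine Prod.ext (Subtype.ext ?_) (Subtype.ext ?_) <;> dsimp [squareFold, squareUnfold] <;> grind

theorem squareFold_zero_left (s : I) :
    squareFold (0, s) = (0, projIcc 0 1 zero_le_one ((s : ℝ) / 2)) := by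
  obtain ⟨s, hs0, hs1⟩ := s
  refine Prod.ext (Subtype.ext ?_) (Subtype.ext ?_) <;> simp [squareFold, coe_projIcc] <;> grind

theorem squareFold_right_one (t : I) :
    squareFold (t, 1) = (0, projIcc 0 1 zero_le_one ((1 + (t : ℝ)) / 2)) := by
  obtain ⟨t, ht0, ht1⟩ := t
  refine Prod.ext (Subtype.ext ?_) (Subtype.ext ?_) <;> simp [squareFold, coe_projIcc] <;> grind

theorem squareUnfold_zero_left (v : I) :
    squareUnfold (0, v) =
      (projIcc 0 1 zero_le_one (2 * (v : ℝ) - 1), projIcc 0 1 zero_le_one (2 * (v : ℝ))) := by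
  obtain ⟨v, hv0, hv1⟩ := v
  refine Prod.ext (Subtype.ext ?_) (Subtype.ext ?_) <;> simp [squareUnfold, coe_projIcc] <;> grind

variable {A : Type*} [TopologicalSpace A]

variable (A) in
def squareReparam (φ : C(I × I, I × I)) : C(I × (A × I), I × (A × I)) where
  toFun p := ((φ (p.1, p.2.2)).1, (p.2.1, (φ (p.1, p.2.2)).2))

@[simp]
theorem squareReparam_apply (φ : C(I × I, I × I)) (t : I) (x : A) (s : I) :
    squareReparam A φ (t, (x, s)) = ((φ (t, s)).1, (x, (φ (t, s)).2)) :=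
  rfl

end unitInterval

namespace ContinuousMap

variable {Z V : Type*} [TopologicalSpace Z] [TopologicalSpace V]

noncomputable def pathConcat (a : C(Z × I, V)) (c : C(I × Z, V)) (h : ∀ z, a (z, 1) = c (0, z)) :
    C(Z × I, V) where
  toFun p := if (p.2 : ℝ) ≤ 1 / 2 then a (p.1, projIcc 0 1 zero_le_one (2 * p.2))
    else c (projIcc 0 1 zero_le_one (2 * p.2 - 1), p.1)
  continuous_toFun := by
    refine Continuous.if_le (by fun_prop) (by fun_prop) (by fun_prop) (by fun_prop) ?_
    rintro ⟨z, v⟩ (hv : (v : ℝ) = 1 / 2)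
    simp [hv, h]

variable {a : C(Z × I, V)} {c : C(I × Z, V)} {h : ∀ z, a (z, 1) = c (0, z)}

theorem pathConcat_of_le {z : Z} {v : I} (hv : (v : ℝ) ≤ 1 / 2) :
    pathConcat a c h (z, v) = a (z, projIcc 0 1 zero_le_one (2 * v)) :=
  if_pos hv

theorem pathConcat_of_ge {z : Z} {v : I} (hv : 1 / 2 ≤ (v : ℝ)) :
    pathConcat a c h (z, v) = c (projIcc 0 1 zero_le_one (2 * v - 1), z) := by
  rcases hv.eq_or_lt with hv | hv
  · simp [pathConcat, ← hv, h]
  · exact if_neg hv.not_ge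

end ContinuousMap

open ContinuousMap unitInterval in
theorem IsCofibration.exists_extension_prod_unitInterval {X Z V : Type} [TopologicalSpace X]
    [TopologicalSpace Z] [TopologicalSpace V] {i : C(X, Z)} (hi : IsCofibration i)
    (a : C(Z × I, V)) (b : C(I × (X × I), V)) (c : C(I × Z, V))
    (hac : ∀ z, a (z, 1) = c (0, z))
    (hab : ∀ x s, b (0, (x, s)) = a (i x, s))
    (hbc : ∀ t x, b (t, (x, 1)) = c (t, i x)) :
    ∃ G : C(I × (Z × I), V),
      (∀ z s, G (0, (z, s)) = a (z, s)) ∧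
      (∀ t x s, G (t, (i x, s)) = b (t, (x, s))) ∧
      (∀ t z, G (t, (z, 1)) = c (t, z)) := by
  have hstart (x : X) (v : I) :
      b.comp (squareReparam X squareUnfold) (0, (x, v)) = pathConcat a c hac (i x, v) := by
    rcases le_total (v : ℝ) (1 / 2) with hv | hv
    · rw [pathConcat_of_le hv, ← hab]
      simp [squareUnfold_zero_left, projIcc_eq_zero.2 (by linarith : 2 * (v : ℝ) - 1 ≤ 0)]
    · rw [pathConcat_of_ge hv, ← hbc]
      simp [squareUnfold_zero_left, projIcc_eq_one.2 (by linarith : 1 ≤ 2 * (v : ℝ))]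
  obtain ⟨G, hG0, hGi⟩ := hi.prodMap_id I V (pathConcat a c hac)
    (b.comp (squareReparam X squareUnfold)) fun ⟨x, v⟩ => hstart x v
  refine ⟨G.comp (squareReparam Z squareFold), fun z s => ?_, fun t x s => ?_, fun t z => ?_⟩
  · have hv : (projIcc 0 1 zero_le_one ((s : ℝ) / 2) : ℝ) = s / 2 :=
      congrArg Subtype.val (projIcc_of_mem _ ⟨by linarith [s.2.1], by linarith [s.2.2]⟩)
    rw [comp_apply, squareReparam_apply, squareFold_zero_left, hG0,
      pathConcat_of_le (by rw [hv]; linarith [s.2.2]), hv, mul_div_cancel₀ _ two_ne_zero,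
      projIcc_val]
  · simpa [squareUnfold_squareFold] using hGi (squareFold (t, s)).1 (x, (squareFold (t, s)).2)
  · have hv : (projIcc 0 1 zero_le_one ((1 + (t : ℝ)) / 2) : ℝ) = (1 + t) / 2 :=
      congrArg Subtype.val (projIcc_of_mem _ ⟨by linarith [t.2.1], by linarith [t.2.2]⟩)
    rw [comp_apply, squareReparam_apply, squareFold_right_one, hG0,
      pathConcat_of_ge (by rw [hv]; linarith [t.2.1]), hv, mul_div_cancel₀ _ two_ne_zero,
      add_sub_cancel_left, projIcc_val]

namespace Cyl

variable {X Y T : Type} [TopologicalSpace X] [TopologicalSpace Y] [TopologicalSpace T]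
  (f : C(X, Y))

def inl : C(X × I, Cyl f) :=
  ⟨fun p => Quot.mk _ (Sum.inl p), continuous_quot_mk.comp continuous_inl⟩

def inr : C(Y, Cyl f) :=
  ⟨fun y => Quot.mk _ (Sum.inr y), continuous_quot_mk.comp continuous_inr⟩

theorem inl_one (x : X) : inl f (x, 1) = inr f (f x) :=
  Quot.sound ⟨x, rfl, rfl⟩

@[elab_as_elim]
theorem ind {P : Cyl f → Prop} (inl : ∀ p, P (inl f p)) (inr : ∀ y, P (inr f y)) (q : Cyl f) :
    P q :=
  Quot.ind (Sum.rec inl inr) q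

def desc (u : C(X × I, T)) (w : C(Y, T)) (h : ∀ x, u (x, 1) = w (f x)) : C(Cyl f, T) where
  toFun := Quot.lift (Sum.elim u w) (by rintro _ _ ⟨x, rfl, rfl⟩; exact h x)
  continuous_toFun := continuous_quot_lift _ (u.continuous.sumElim w.continuous)

-- Currying avoids having to show that `I × Cyl f` carries the quotient topology.
def homotopyDesc (u : C(I × (X × I), T)) (w : C(I × Y, T))
    (h : ∀ t x, u (t, (x, 1)) = w (t, f x)) : C(I × Cyl f, T) :=
  (desc f (u.comp .prodSwap).curry (w.comp .prodSwap).curry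
    fun x => ContinuousMap.ext fun t => h t x).uncurry.comp .prodSwap

@[simp]
theorem homotopyDesc_inl (u : C(I × (X × I), T)) (w : C(I × Y, T)) (h) (t : I) (p : X × I) :
    homotopyDesc f u w h (t, inl f p) = u (t, p) :=
  rfl

@[simp]
theorem homotopyDesc_inr (u : C(I × (X × I), T)) (w : C(I × Y, T)) (h) (t : I) (y : Y) :
    homotopyDesc f u w h (t, inr f y) = w (t, y) :=
  rfl

end Cyl

section
variable {X Y Z W : Type} [TopologicalSpace X] [TopologicalSpace Y]
    [TopologicalSpace Z] [TopologicalSpace W]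
    {f : C(X, Y)} {g : C(Z, W)} {i₁ : C(X, Z)} {i₂ : C(Y, W)} {hsq : ∀ x, g (i₁ x) = i₂ (f x)}

@[simp]
theorem cylMap_inl (p : X × I) : cylMap f g i₁ i₂ hsq (Cyl.inl f p) = Cyl.inl g (i₁ p.1, p.2) :=
  rfl

@[simp]
theorem cylMap_inr (y : Y) : cylMap f g i₁ i₂ hsq (Cyl.inr f y) = Cyl.inr g (i₂ y) :=
  rfl

end

/-- given a commutative square with cofibration verticals
`i₁ : X → Z`, `i₂ : Y → W` and horizontals `f : X → Y`, `g : Z → W`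
satisfying `g ∘ i₁ = i₂ ∘ f`, the induced inclusion of the mapping cylinder of `f`
into the mapping cylinder of `g` is a cofibration. -/
theorem cylMap_isCofibration {X Y Z W : Type} [TopologicalSpace X] [TopologicalSpace Y]
    [TopologicalSpace Z] [TopologicalSpace W]
    (f : C(X, Y)) (g : C(Z, W)) (i₁ : C(X, Z)) (i₂ : C(Y, W))
    (hsq : ∀ x, g (i₁ x) = i₂ (f x))
    (h₁ : IsCofibration i₁) (h₂ : IsCofibration i₂) :
    IsCofibration (cylMap f g i₁ i₂ hsq) := by
  intro V _ F H hH
  obtain ⟨GW, hGW0, hGWi⟩ := h₂ V (F.comp (Cyl.inr g))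
    (H.comp ((ContinuousMap.id I).prodMap (Cyl.inr f))) fun y => hH (Cyl.inr f y)
  obtain ⟨GZ, hGZ0, hGZi, hGZ1⟩ := h₁.exists_extension_prod_unitInterval (F.comp (Cyl.inl g))
    (H.comp ((ContinuousMap.id I).prodMap (Cyl.inl f))) (GW.comp ((ContinuousMap.id I).prodMap g))
    (fun z => by simp [Cyl.inl_one, hGW0]) (fun x s => hH (Cyl.inl f (x, s)))
    (fun t x => by simp [Cyl.inl_one, hsq, hGWi])
  have hGZW : ∀ t z, GZ (t, (z, 1)) = GW (t, g z) := hGZ1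
  refine ⟨Cyl.homotopyDesc g GZ GW hGZW, fun q => ?_, fun t q => ?_⟩
  · induction q using Cyl.ind with
    | inl p => simp [hGZ0]
    | inr w => simp [hGW0]
  · induction q using Cyl.ind with
    | inl p => simp [hGZi]
    | inr y => simp [hGWi]
end

section
/- Let G be a group acting on each space of an operad O in topological spaces (so that all operad structure maps are G-equivariant). Define (O ⋊ G)(k) = O(k) × G^k with composition m̃((o, g₁,…,g_k); (o₁, g₁¹,…,g₁^{m₁}),…,(o_k, g_k¹,…,g_k^{m_k})) = (m(o; g₁·o₁,…,g_k·o_k), g₁g₁¹,…, g_k g_k^{m_k}), where m is the composition of O and G acts on O diagonally on inputs. Then O ⋊ G with the unit (1_O, e) ∈ (O ⋊ G)(1) satisfies the associativity and unit axioms of an operad. -/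
/-!
The semidirect product is checked componentwise. In the `O`-component, equivariance of the
composition and `act_mul` turn an iterated composite in `O ⋊ G` into the iterated composite in `O`
of the inputs twisted by the products `g_i ḡ_ij`, so associativity comes from that of `O`; the unit
axioms use that `1` acts trivially and that `O.unit` is fixed. In the `G`-component both sides of
associativity are the products `g_i ḡ_ij h_ijl`, reindexed by `finSigmaEquiv`; what has to be shown
is that this gluing of tuples is associative, which follows from the formula
`∑_{i' < i} m_{i'} + j` for the position of `(i, j)`.
-/

/-- The canonical equivalence `(Σ i, Fin (ms i)) ≃ Fin (∑ i, ms i)`, gluing a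
tuple of tuples into a single tuple. -/
def finSigmaEquiv : ∀ {k : ℕ} (ms : Fin k → ℕ), (Σ i : Fin k, Fin (ms i)) ≃ Fin (∑ i, ms i)
  | 0, ms =>
    { toFun := fun x => x.1.elim0
      invFun := fun x => absurd x.2 (by simp)
      left_inv := fun x => x.1.elim0
      right_inv := fun x => absurd x.2 (by simp) }
  | k + 1, ms =>
    (calc (Σ i : Fin (k + 1), Fin (ms i))
        ≃ Fin (ms 0) ⊕ Σ i : Fin k, Fin (ms i.succ) :=
          { toFun := fun x =>
              Fin.cases (motive := fun i => Fin (ms i) → (Fin (ms 0) ⊕ Σ i : Fin k, Fin (ms i.succ)))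
                (fun j => Sum.inl j) (fun i' j => Sum.inr ⟨i', j⟩) x.1 x.2
            invFun := fun x => x.casesOn (fun j => ⟨0, j⟩) (fun p => ⟨p.1.succ, p.2⟩)
            left_inv := by rintro ⟨i, j⟩; induction i using Fin.cases <;> rfl
            right_inv := by rintro (j | ⟨i, j⟩) <;> rfl }
      _ ≃ Fin (ms 0) ⊕ Fin (∑ i : Fin k, ms i.succ) :=
          Equiv.sumCongr (Equiv.refl _) (finSigmaEquiv fun i => ms i.succ)
      _ ≃ Fin (ms 0 + ∑ i : Fin k, ms i.succ) := finSumFinEquiv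
      _ ≃ Fin (∑ i : Fin (k + 1), ms i) := finCongr (Fin.sum_univ_succ ms).symm)

/-- An operad-like structure: spaces `ob k`, a unit in `ob 1`, and a full
composition map. (Only the data; the axioms are stated separately.) -/
structure OperadData where
  ob : ℕ → Type
  unit : ob 1
  comp : ∀ {k : ℕ} (ms : Fin k → ℕ), ob k → (∀ i, ob (ms i)) → ob (∑ i, ms i)

/-- The two unit axioms of an operad. -/
def OperadData.UnitAxioms (O : OperadData) : Prop :=
  (∀ (n : ℕ) (o : O.ob n) (h : (∑ _i : Fin 1, n) = n),
      O.comp (fun _ : Fin 1 => n) O.unit (fun _ => o) = cast (congrArg O.ob h).symm o) ∧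
  (∀ (k : ℕ) (o : O.ob k) (h : (∑ _i : Fin k, 1) = k),
      O.comp (fun _ : Fin k => 1) o (fun _ => O.unit) = cast (congrArg O.ob h).symm o)

/-- The associativity axiom of an operad (stated using `finSigmaEquiv` to glue
the doubly-indexed family into a single tuple). -/
def OperadData.AssocAxiom (O : OperadData) : Prop :=
  ∀ (k : ℕ) (ms : Fin k → ℕ) (ns : ∀ i, Fin (ms i) → ℕ)
    (o : O.ob k) (os : ∀ i, O.ob (ms i)) (ps : ∀ i j, O.ob (ns i j))
    (h : (∑ t : Fin (∑ i, ms i),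
            ns ((finSigmaEquiv ms).symm t).1 ((finSigmaEquiv ms).symm t).2)
          = ∑ i : Fin k, ∑ j : Fin (ms i), ns i j),
    cast (congrArg O.ob h)
      (O.comp (fun t => ns ((finSigmaEquiv ms).symm t).1 ((finSigmaEquiv ms).symm t).2)
        (O.comp ms o os)
        (fun t => ps ((finSigmaEquiv ms).symm t).1 ((finSigmaEquiv ms).symm t).2))
      = O.comp (fun i => ∑ j, ns i j) o (fun i => O.comp (ns i) (os i) (ps i))

/-- The semidirect product `O ⋊ G` of an operad with a group acting on it:
`(O ⋊ G)(k) = O(k) × G^k`, with composition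
`m̃((o,g₁,…,g_k);(o₁,ḡ₁),…,(o_k,ḡ_k)) = (m(o; g₁·o₁,…,g_k·o_k), (g_i · (ḡ_i)_j)_{i,j})`. -/
def semidirectProduct (O : OperadData) (G : Type) [Group G]
    (act : ∀ n, G → O.ob n → O.ob n) : OperadData where
  ob n := O.ob n × (Fin n → G)
  unit := (O.unit, fun _ => 1)
  comp {k} ms p qs :=
    (O.comp ms p.1 (fun i => act _ (p.2 i) (qs i).1),
     fun t => p.2 ((finSigmaEquiv ms).symm t).1 *
       (qs ((finSigmaEquiv ms).symm t).1).2 ((finSigmaEquiv ms).symm t).2)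

open Finset

theorem Fin.sum_Iio_succ {M : Type*} [AddCommMonoid M] {k : ℕ} (f : Fin (k + 1) → M)
    (i : Fin k) : ∑ i' ∈ Iio i.succ, f i' = f 0 + ∑ i' ∈ Iio i, f i'.succ := by
  have : Iio i.succ = Finset.cons 0 ((Iio i).map (Fin.succEmb k)) (by simp) := by
    ext x
    cases x using Fin.cases <;> simp
  rw [this, Finset.sum_cons, sum_map]
  rfl

theorem finSigmaEquiv_apply_val : ∀ {k : ℕ} (ms : Fin k → ℕ) (i : Fin k) (j : Fin (ms i)),
    (finSigmaEquiv ms ⟨i, j⟩ : ℕ) = ∑ i' ∈ Iio i, ms i' + j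
  | 0, _, i, _ => i.elim0
  | k + 1, ms, i, j => by
    induction i using Fin.cases with
    | zero => simp [finSigmaEquiv]
    | succ i =>
      simp [finSigmaEquiv, finSigmaEquiv_apply_val (fun i' => ms i'.succ) i j, Fin.sum_Iio_succ]
      ring

theorem finSigmaEquiv_fin_one_symm_snd_val {ms : Fin 1 → ℕ} (t : Fin (∑ i, ms i)) :
    (((finSigmaEquiv ms).symm t).2 : ℕ) = t := by
  conv_rhs => rw [← (finSigmaEquiv ms).apply_symm_apply t, finSigmaEquiv_apply_val]
  simp [Subsingleton.elim ((finSigmaEquiv ms).symm t).1 0]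

theorem finSigmaEquiv_const_one_symm_fst_val {k : ℕ} (t : Fin (∑ _i : Fin k, 1)) :
    (((finSigmaEquiv fun _ => 1).symm t).1 : ℕ) = t := by
  conv_rhs => rw [← (finSigmaEquiv _).apply_symm_apply t, finSigmaEquiv_apply_val]
  simp

theorem sum_Iio_add_le_sum_Iio {k : ℕ} (ms : Fin k → ℕ) {a i : Fin k} (h : a < i) :
    ∑ i' ∈ Iio a, ms i' + ms a ≤ ∑ i' ∈ Iio i, ms i' := by
  rw [add_comm, ← sum_insert (by simp), Iio_insert]
  exact sum_le_sum_of_subset fun x hx => mem_Iio.2 ((mem_Iic.1 hx).trans_lt h)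

theorem finSigmaEquiv_lt_finSigmaEquiv_iff {k : ℕ} (ms : Fin k → ℕ) {a i : Fin k}
    (b : Fin (ms a)) (j : Fin (ms i)) :
    finSigmaEquiv ms ⟨a, b⟩ < finSigmaEquiv ms ⟨i, j⟩ ↔ a < i ∨ a = i ∧ (b : ℕ) < j := by
  rw [Fin.lt_def, finSigmaEquiv_apply_val, finSigmaEquiv_apply_val]
  have hb := b.isLt
  have hj := j.isLt
  rcases lt_trichotomy a i with h | rfl | h
  · have := sum_Iio_add_le_sum_Iio ms h
    omega
  · simp
  · have := sum_Iio_add_le_sum_Iio ms h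
    simp only [h.not_gt, h.ne', false_or, false_and, iff_false, not_lt]
    omega

theorem sum_Iio_finSigmaEquiv {M : Type*} [AddCommMonoid M] {k : ℕ} (ms : Fin k → ℕ)
    (f : (Σ i, Fin (ms i)) → M) (i : Fin k) (j : Fin (ms i)) :
    ∑ t ∈ Iio (finSigmaEquiv ms ⟨i, j⟩), f ((finSigmaEquiv ms).symm t)
      = ∑ a ∈ Iio i, ∑ b, f ⟨a, b⟩ + ∑ b ∈ Iio j, f ⟨i, b⟩ := by
  set e := finSigmaEquiv ms
  let inner a := ∑ b with e ⟨a, b⟩ < e ⟨i, j⟩, f ⟨a, b⟩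
  have reindex : ∑ t ∈ Iio (e ⟨i, j⟩), f (e.symm t) = ∑ a, inner a := calc
    _ = ∑ t, if t < e ⟨i, j⟩ then f (e.symm t) else 0 := by
      rw [← sum_filter]
      congr 1
      ext
      simp
    _ = ∑ q, if e q < e ⟨i, j⟩ then f q else 0 := by
      rw [← e.sum_comp]
      simp
    _ = ∑ a, inner a := by
      rw [Fintype.sum_sigma]
      simp [inner, sum_filter]
  have vanish : ∀ a ∉ Iic i, inner a = 0 := fun a ha =>
    sum_eq_zero fun b hb => by
      simp only [mem_Iic, not_le, mem_filter, e, finSigmaEquiv_lt_finSigmaEquiv_iff] at ha hb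
      exact (hb.2.elim (fun h => h.not_gt ha) fun h => h.1.not_gt ha).elim
  rw [reindex, ← sum_subset (subset_univ _) fun a _ ha => vanish a ha, ← Iio_insert,
    sum_insert (by simp), add_comm]
  congr 1
  · refine sum_congr rfl fun a ha => ?_
    simp only [inner, e]
    rw [filter_true_of_mem fun b _ => (finSigmaEquiv_lt_finSigmaEquiv_iff ms b j).2
      (Or.inl (mem_Iio.1 ha))]
  · simp only [inner, e]
    congr 1
    ext b
    simp [finSigmaEquiv_lt_finSigmaEquiv_iff]

-- Gluing along `ms` and then along the induced family agrees with gluing each row first.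
theorem finSigmaEquiv_assoc_val {k : ℕ} (ms : Fin k → ℕ) (ns : ∀ i, Fin (ms i) → ℕ)
    (t : Fin (∑ i, ms i))
    (l : Fin (ns ((finSigmaEquiv ms).symm t).1 ((finSigmaEquiv ms).symm t).2)) :
    (finSigmaEquiv (fun t => ns ((finSigmaEquiv ms).symm t).1 ((finSigmaEquiv ms).symm t).2)
        ⟨t, l⟩ : ℕ)
      = finSigmaEquiv (fun i => ∑ j, ns i j)
          ⟨((finSigmaEquiv ms).symm t).1,
            finSigmaEquiv (ns _) ⟨((finSigmaEquiv ms).symm t).2, l⟩⟩ := by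
  have hprefix := sum_Iio_finSigmaEquiv ms (fun p => ns p.1 p.2)
    ((finSigmaEquiv ms).symm t).1 ((finSigmaEquiv ms).symm t).2
  simp only [Sigma.eta, Equiv.apply_symm_apply] at hprefix
  simp only [finSigmaEquiv_apply_val, hprefix]
  ring

section SemidirectProduct

variable {O : OperadData} {G : Type} [Group G] {act : ∀ n, G → O.ob n → O.ob n}

theorem semidirectProduct_cast {m n : ℕ} (h : m = n)
    (e : (semidirectProduct O G act).ob m = (semidirectProduct O G act).ob n)
    (x : (semidirectProduct O G act).ob m) :
    cast e x = (cast (congrArg O.ob h) x.1, fun t => x.2 (Fin.cast h.symm t)) := by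
  subst h
  rfl

theorem semidirectProduct_comp_snd_finSigmaEquiv {k : ℕ} (ms : Fin k → ℕ)
    (p : (semidirectProduct O G act).ob k) (qs : ∀ i, (semidirectProduct O G act).ob (ms i))
    (i : Fin k) (j : Fin (ms i)) :
    ((semidirectProduct O G act).comp ms p qs).2 (finSigmaEquiv ms ⟨i, j⟩)
      = p.2 i * (qs i).2 j := by
  show p.2 _ * _ = _
  rw [Equiv.symm_apply_apply]

theorem semidirectProduct_unitAxioms (act_one : ∀ n (o : O.ob n), act n 1 o = o)
    (act_unit : ∀ g : G, act 1 g O.unit = O.unit) (hunit : O.UnitAxioms) :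
    (semidirectProduct O G act).UnitAxioms := by
  constructor
  · intro n o h
    rw [semidirectProduct_cast h.symm]
    refine Prod.ext ?_ (funext fun t => ?_)
    · show O.comp _ O.unit (fun _ => act n 1 o.1) = _
      simp only [act_one]
      exact hunit.1 n o.1 h
    · show 1 * _ = _
      rw [one_mul]
      exact congrArg o.2 (Fin.ext (finSigmaEquiv_fin_one_symm_snd_val t))
  · intro k o h
    rw [semidirectProduct_cast h.symm]
    refine Prod.ext ?_ (funext fun t => ?_)
    · show O.comp _ o.1 (fun i => act 1 (o.2 i) O.unit) = _
      simp only [act_unit]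
      exact hunit.2 k o.1 h
    · show _ * 1 = _
      rw [mul_one]
      exact congrArg o.2 (Fin.ext (finSigmaEquiv_const_one_symm_fst_val t))

theorem semidirectProduct_assocAxiom
    (act_mul : ∀ n (g g' : G) (o : O.ob n), act n (g * g') o = act n g (act n g' o))
    (act_equivariant : ∀ (k : ℕ) (ms : Fin k → ℕ) (g : G) (o : O.ob k)
      (os : ∀ i, O.ob (ms i)),
      act _ g (O.comp ms o os) = O.comp ms (act k g o) (fun i => act _ g (os i)))
    (hassoc : O.AssocAxiom) :
    (semidirectProduct O G act).AssocAxiom := by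
  intro k ms ns o os ps h
  rw [semidirectProduct_cast h]
  refine Prod.ext ?_ (funext fun t' => ?_)
  · simpa only [semidirectProduct, act_equivariant, ← act_mul] using
      hassoc k ms ns o.1 (fun i => act _ (o.2 i) (os i).1)
        (fun i j => act _ (o.2 i * (os i).2 j) (ps i j).1) h
  · obtain ⟨⟨t, l⟩, rfl⟩ := ((finSigmaEquiv _).trans (finCongr h)).surjective t'
    have hcast : Fin.cast h (finSigmaEquiv _ ⟨t, l⟩)
        = finSigmaEquiv (fun i => ∑ j, ns i j) ⟨((finSigmaEquiv ms).symm t).1,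
            finSigmaEquiv (ns _) ⟨((finSigmaEquiv ms).symm t).2, l⟩⟩ :=
      Fin.ext (finSigmaEquiv_assoc_val ms ns t l)
    simp only [Equiv.trans_apply, finCongr_apply, Fin.cast_cast, Fin.cast_eq_self]
    rw [semidirectProduct_comp_snd_finSigmaEquiv, hcast, semidirectProduct_comp_snd_finSigmaEquiv,
      semidirectProduct_comp_snd_finSigmaEquiv]
    exact mul_assoc _ _ _

end SemidirectProduct

/-- if `G` is a group acting on each space of an operad `O` such that
all composition maps are `G`-equivariant (`g·m(o; o₁,…,o_k) = m(g·o; g·o₁,…,g·o_k)`)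
and the unit is fixed, then the semidirect product `O ⋊ G`, with unit `(1_O, e)`,
satisfies the associativity and unit axioms of an operad. -/
theorem semidirectProduct_is_operad (O : OperadData) (G : Type) [Group G]
    (act : ∀ n, G → O.ob n → O.ob n)
    (act_one : ∀ n (o : O.ob n), act n 1 o = o)
    (act_mul : ∀ n (g g' : G) (o : O.ob n), act n (g * g') o = act n g (act n g' o))
    (act_unit : ∀ g : G, act 1 g O.unit = O.unit)
    (act_equivariant : ∀ (k : ℕ) (ms : Fin k → ℕ) (g : G) (o : O.ob k)
      (os : ∀ i, O.ob (ms i)),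
      act _ g (O.comp ms o os) = O.comp ms (act k g o) (fun i => act _ g (os i)))
    (hunit : O.UnitAxioms) (hassoc : O.AssocAxiom) :
    (semidirectProduct O G act).UnitAxioms ∧ (semidirectProduct O G act).AssocAxiom :=
  ⟨semidirectProduct_unitAxioms act_one act_unit hunit,
    semidirectProduct_assocAxiom act_mul act_equivariant hassoc⟩
end
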